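/- arXiv:2312.06634 — 7 statements merged into one kernel-verified Lean document; each statement's English description precedes it below -/
import Mathlib

section
/- If Θ and C are real N×n matrices such that the n×n matrix ΘᵀC + CᵀΘ − I is positive semidefinite, then det(ΘᵀC + CᵀΘ − I) ≤ (det(ΘᵀC))². -/
/-!
With `A = ΘᵀC`, the Loewner inequality `A + Aᵀ - 1 ≤ A Aᵀ` holds because the difference is
`(A - 1)(A - 1)ᵀ`, and `det (A Aᵀ) = (det A)²`; so it suffices that `det` is monotone on positive
semidefinite matrices. For that, write `M = Bᴴ B` with `B` invertible (the singular case being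
trivial); then `N = Bᴴ (1 + T) B` with `T = B⁻ᴴ (N - M) B⁻¹ ⪰ 0`, and
`det (1 + T) ≥ 1` since every eigenvalue of `1 + T` is at least `1`.
-/

open Matrix

namespace Matrix

variable {𝕜 n : Type*} [RCLike 𝕜] [Fintype n] [DecidableEq n]

open scoped ComplexOrder

open scoped Pointwise in
theorem PosSemidef.one_le_det_one_add {Q : Matrix n n 𝕜} (hQ : Q.PosSemidef) :
    1 ≤ (1 + Q).det := by
  have hQ' : (1 + Q).IsHermitian := (PosSemidef.one.add hQ).isHermitian
  have hspec : spectrum ℝ (1 + Q) = ({1} : Set ℝ) + spectrum ℝ Q := by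
    simpa using (spectrum.singleton_add_eq (R := ℝ) Q 1).symm
  rw [hQ'.det_eq_prod_eigenvalues, ← RCLike.ofReal_prod, ← RCLike.ofReal_one,
    RCLike.ofReal_le_ofReal]
  refine Finset.one_le_prod fun i _ => ?_
  obtain ⟨_, rfl, μ, hμ, hi⟩ := hspec ▸ hQ'.eigenvalues_mem_spectrum_real i
  rw [hQ.isHermitian.spectrum_real_eq_range_eigenvalues] at hμ
  obtain ⟨j, rfl⟩ := hμ
  simpa [← hi] using hQ.eigenvalues_nonneg j

-- The L2 operator norm is opened only for the C⋆-algebra structure that factors `M = Bᴴ B`.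
open scoped MatrixOrder Matrix.Norms.L2Operator in
theorem det_le_det_of_le {M N : Matrix n n 𝕜} (hM : M.PosSemidef) (hMN : M ≤ N) :
    M.det ≤ N.det := by
  by_cases hdet : M.det = 0
  · simpa [hdet] using (hM.nonneg.trans hMN).posSemidef.det_nonneg
  obtain ⟨B, hB, rfl⟩ := CStarAlgebra.isStrictlyPositive_iff_eq_star_mul_self.mp
    (hM.posDef_iff_det_ne_zero.mpr hdet).isStrictlyPositive
  rw [star_eq_conjTranspose] at hM hMN ⊢
  have hBdet : IsUnit B.det := (isUnit_iff_isUnit_det B).mp hB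
  set T := B⁻¹ᴴ * (N - Bᴴ * B) * B⁻¹
  have hT : T.PosSemidef := hMN.conjTranspose_mul_mul_same B⁻¹
  have hBinv : Bᴴ * B⁻¹ᴴ = 1 := by
    rw [← conjTranspose_mul, nonsing_inv_mul _ hBdet, conjTranspose_one]
  have hfactor : Bᴴ * (1 + T) * B = N := by
    simp only [T, mul_add, add_mul, mul_one, ← mul_assoc, hBinv, one_mul]
    rw [mul_assoc _ B⁻¹, nonsing_inv_mul _ hBdet, mul_one, add_sub_cancel]
  calc (Bᴴ * B).det = (Bᴴ * B).det * 1 := (mul_one _).symm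
    _ ≤ (Bᴴ * B).det * (1 + T).det :=
      mul_le_mul_of_nonneg_left hT.one_le_det_one_add hM.det_nonneg
    _ = (Bᴴ * (1 + T) * B).det := by rw [det_mul, det_mul, det_mul]; ring
    _ = N.det := by rw [hfactor]

open scoped MatrixOrder in
theorem add_conjTranspose_sub_one_le_mul_conjTranspose (A : Matrix n n 𝕜) :
    A + Aᴴ - 1 ≤ A * Aᴴ := by
  have h := posSemidef_self_mul_conjTranspose (A - 1)
  rw [conjTranspose_sub, conjTranspose_one] at h
  rw [le_iff]
  convert h using 1
  noncomm_ring

end Matrix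

/-- If `ΘᵀC + CᵀΘ − I` is positive semidefinite, then
`det (ΘᵀC + CᵀΘ − I) ≤ (det (ΘᵀC))²`. -/
theorem det_surrogate_le_det_sq (N n : ℕ) (Θ C : Matrix (Fin N) (Fin n) ℝ)
    (h : (Θᵀ * C + Cᵀ * Θ - 1).PosSemidef) :
    (Θᵀ * C + Cᵀ * Θ - 1).det ≤ (Θᵀ * C).det ^ 2 := by
  set A := Θᵀ * C
  have hAT : Cᵀ * Θ = Aᵀ := by rw [transpose_mul, transpose_transpose]
  rw [hAT] at h ⊢
  calc (A + Aᵀ - 1).det ≤ (A * Aᵀ).det :=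
        det_le_det_of_le h (by simpa using add_conjTranspose_sub_one_le_mul_conjTranspose A)
    _ = A.det ^ 2 := by rw [det_mul, det_transpose, sq]
end

section
/- If Θ and C are real N×n matrices such that G := ΘᵀC + CᵀΘ − I is positive definite, then max{0, −log det G} ≥ 2(1 − |det(ΘᵀC)|). -/
/-!
Put `M = ΘᵀC`, so that `G = M + Mᵀ - 1` and `MᵀM - G = (M - 1)ᵀ(M - 1) ⪰ 0`. The determinant is
monotone on positive definite matrices (conjugating by `√G` reduces this to `det (1 + P) ≥ 1` for
`P ⪰ 0`, a product of eigenvalues `1 + λᵢ ≥ 1`), hence `det G ≤ det (MᵀM) = |det M|²`. Then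
`-log det G ≥ -2 log |det M| ≥ 2 (1 - |det M|)` by `log t ≤ t - 1`.
-/

open Matrix
open scoped MatrixOrder ComplexOrder

theorem Real.two_mul_one_sub_le_neg_log {x y : ℝ} (hx : 0 ≤ x) (hy : 0 < y) (hyx : y ≤ x ^ 2) :
    2 * (1 - x) ≤ -Real.log y := by
  have hx' : 0 < x := hx.lt_of_ne (by rintro rfl; norm_num at hyx; linarith)
  calc 2 * (1 - x) ≤ -(2 * Real.log x) := by linarith [Real.log_le_sub_one_of_pos hx']
    _ = -Real.log (x ^ 2) := by rw [Real.log_pow, Nat.cast_ofNat]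
    _ ≤ -Real.log y := neg_le_neg (Real.log_le_log hy hyx)

namespace Matrix

variable {n 𝕜 : Type*} [Fintype n] [RCLike 𝕜]

theorem add_conjTranspose_sub_one_le_conjTranspose_mul_self [DecidableEq n] (M : Matrix n n 𝕜) :
    M + Mᴴ - 1 ≤ Mᴴ * M := by
  rw [le_iff]
  convert posSemidef_conjTranspose_mul_self (M - 1) using 1
  rw [conjTranspose_sub, conjTranspose_one]
  noncomm_ring

theorem PosSemidef.one_le_det_one_add_s2 [DecidableEq n] {P : Matrix n n 𝕜} (hP : P.PosSemidef) :
    1 ≤ (1 + P).det := by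
  have h : 1 + P = cfc (fun x : ℝ => 1 + x) P := by
    rw [cfc_add .., cfc_const_one .., cfc_id' ..]
  rw [h, hP.1.cfc_eq]
  simp only [IsHermitian.cfc, det_map, det_diagonal, Function.comp_apply, map_add, map_one]
  exact Finset.one_le_prod fun i _ =>
    le_add_of_nonneg_right (RCLike.ofReal_nonneg.mpr (hP.eigenvalues_nonneg i))

theorem PosDef.det_le_det [DecidableEq n] {A B : Matrix n n 𝕜} (hA : A.PosDef) (hAB : A ≤ B) :
    A.det ≤ B.det := by
  set S := CFC.sqrt A
  have hS : Sᴴ = S := (CFC.sqrt_nonneg A).posSemidef.1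
  have hSS : S * S = A := CFC.sqrt_mul_sqrt_self A hA.posSemidef.nonneg
  have hSdet : S.det * S.det = A.det := by rw [← det_mul, hSS]
  have hSunit : IsUnit S.det := by
    refine isUnit_iff_ne_zero.mpr fun h0 => hA.det_pos.ne' ?_
    rw [← hSdet, h0, zero_mul]
  set P := S⁻¹ * (B - A) * S⁻¹
  have hP : P.PosSemidef := by
    simpa [P, conjTranspose_nonsing_inv, hS] using (le_iff.mp hAB).mul_mul_conjTranspose_same S⁻¹
  have hB : B = S * (1 + P) * S := by
    rw [Matrix.mul_add, Matrix.add_mul, Matrix.mul_one, hSS, ← Matrix.mul_assoc, ← Matrix.mul_assoc,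
      mul_nonsing_inv _ hSunit, Matrix.one_mul, nonsing_inv_mul_cancel_right _ _ hSunit,
      add_sub_cancel]
  calc A.det = A.det * 1 := (mul_one _).symm
    _ ≤ A.det * (1 + P).det := mul_le_mul_of_nonneg_left hP.one_le_det_one_add_s2 hA.det_pos.le
    _ = B.det := by rw [hB, det_mul, det_mul, ← hSdet]; ring

end Matrix

/-- If `G := ΘᵀC + CᵀΘ − I` is positive definite, then
`max {0, −log det G} ≥ 2 (1 − |det (ΘᵀC)|)`. -/
theorem barrier_term_lower_bound (N n : ℕ) (Θ C : Matrix (Fin N) (Fin n) ℝ)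
    (h : (Θᵀ * C + Cᵀ * Θ - 1).PosDef) :
    2 * (1 - |(Θᵀ * C).det|) ≤ max 0 (-Real.log (Θᵀ * C + Cᵀ * Θ - 1).det) := by
  set M := Θᵀ * C
  have hMT : Cᵀ * Θ = Mᴴ := by
    rw [conjTranspose_eq_transpose_of_trivial, transpose_mul, transpose_transpose]
  rw [hMT] at h ⊢
  have hdet : (M + Mᴴ - 1).det ≤ |M.det| ^ 2 :=
    calc (M + Mᴴ - 1).det ≤ (Mᴴ * M).det :=
          h.det_le_det (add_conjTranspose_sub_one_le_conjTranspose_mul_self M)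
      _ = |M.det| ^ 2 := by rw [det_mul, det_conjTranspose, star_trivial, sq_abs, sq]
  exact le_max_of_le_right (Real.two_mul_one_sub_le_neg_log (abs_nonneg _) h.det_pos hdet)
end

section
/- Let μ > 0, J∘ ≥ 0, Θ a real N×n matrix, and C⁽¹⁾, …, C⁽ᴹ⁾ real N×n matrices such that each G⁽ⁱ⁾ := ΘᵀC⁽ⁱ⁾ + C⁽ⁱ⁾ᵀΘ − I is positive definite. If (μ/M)·Σ_{i=1}^{M} max{0, −log det G⁽ⁱ⁾} ≤ J∘, then (1/M)·Σ_{i=1}^{M} (1 − |det(ΘᵀC⁽ⁱ⁾)|) ≤ J∘/(2μ). -/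
/-!
Write `S = ΘᵀC` and `G = S + Sᵀ - 1`. Then `SᵀS = G + (S - 1)ᵀ(S - 1)`, so `G ≤ SᵀS` in the
Loewner order and, the determinant being monotone on positive definite matrices,
`det G ≤ (det S)²`. Hence `1 - |det S| ≤ 1 - √(det G) ≤ -½ log (det G)` by `log x ≤ x - 1`,
and averaging over the samples gives the bound.
-/

open Matrix
open scoped Pointwise

namespace Matrix

variable {ι : Type*} [Fintype ι] [DecidableEq ι]

theorem PosSemidef.one_le_det_one_add_s3 {M : Matrix ι ι ℝ} (hM : M.PosSemidef) :
    1 ≤ (1 + M).det := by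
  have hH : (1 + M).IsHermitian := isHermitian_one.add hM.isHermitian
  rw [hH.det_eq_prod_eigenvalues]
  refine Finset.one_le_prod fun i _ ↦ ?_
  have hshift : spectrum ℝ (1 + M) = ({1} : Set ℝ) + spectrum ℝ M := by
    rw [spectrum.singleton_add_eq, map_one]
  have hspec := hH.eigenvalues_mem_spectrum_real i
  rw [hshift] at hspec
  obtain ⟨_, rfl, x, hx, hxi⟩ := hspec
  have hx_nonneg : 0 ≤ x := (posSemidef_iff_isHermitian_and_spectrum_nonneg.mp hM).2 hx
  simp only [RCLike.ofReal_real_eq_id, id_eq, ← hxi]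
  linarith

open scoped MatrixOrder in
theorem PosDef.det_le_det_add {A B : Matrix ι ι ℝ} (hA : A.PosDef) (hB : B.PosSemidef) :
    A.det ≤ (A + B).det := by
  set R := CFC.sqrt A
  have hRR : R * R = A := CFC.sqrt_mul_sqrt_self A hA.posSemidef.nonneg
  have hR : IsUnit R.det :=
    isUnit_iff_ne_zero.mpr fun h ↦ hA.det_pos.ne' (by rw [← hRR, det_mul, h, zero_mul])
  have hRinv : (R⁻¹)ᴴ = R⁻¹ := by
    rw [conjTranspose_nonsing_inv, (CFC.sqrt_nonneg A).posSemidef.isHermitian.eq]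
  have hfactor : A + B = R * (1 + R⁻¹ * B * R⁻¹) * R := by
    rw [Matrix.mul_add, Matrix.add_mul, Matrix.mul_one, hRR, ← Matrix.mul_assoc, ← Matrix.mul_assoc,
      mul_nonsing_inv R hR, Matrix.one_mul, Matrix.mul_assoc,
      nonsing_inv_mul R hR, Matrix.mul_one]
  have hC : (R⁻¹ * B * R⁻¹).PosSemidef := by
    simpa only [hRinv] using hB.mul_mul_conjTranspose_same R⁻¹
  calc A.det = A.det * 1 := (mul_one _).symm
    _ ≤ A.det * (1 + R⁻¹ * B * R⁻¹).det := by gcongr; exacts [hA.det_pos.le, hC.one_le_det_one_add_s3]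
    _ = (A + B).det := by rw [hfactor, det_mul, det_mul, ← hRR, det_mul]; ring

theorem det_add_transpose_sub_one_le_sq_det {S : Matrix ι ι ℝ} (hS : (S + Sᵀ - 1).PosDef) :
    (S + Sᵀ - 1).det ≤ S.det ^ 2 := by
  have hgram : Sᵀ * S = (S + Sᵀ - 1) + (S - 1)ᵀ * (S - 1) := by
    simp only [transpose_sub, transpose_one]
    noncomm_ring
  calc (S + Sᵀ - 1).det ≤ (Sᵀ * S).det := by
        rw [hgram]
        have hPSD := posSemidef_conjTranspose_mul_self (S - 1)
        rw [conjTranspose_eq_transpose_of_trivial] at hPSD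
        exact hS.det_le_det_add hPSD
    _ = S.det ^ 2 := by rw [det_mul, det_transpose, sq]

end Matrix

theorem Real.one_sub_sqrt_le_neg_log_div_two {x : ℝ} (hx : 0 < x) :
    1 - √x ≤ -Real.log x / 2 := by
  have := Real.log_le_sub_one_of_pos (Real.sqrt_pos.mpr hx)
  rw [Real.log_sqrt hx.le] at this
  linarith

theorem one_sub_abs_le_neg_log_div_two {g s : ℝ} (hg : 0 < g) (hgs : g ≤ s ^ 2) :
    1 - |s| ≤ -Real.log g / 2 := by
  have : √g ≤ |s| := Real.sqrt_le_sqrt hgs |>.trans_eq (Real.sqrt_sq_eq_abs s)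
  linarith [Real.one_sub_sqrt_le_neg_log_div_two hg]

theorem barrier_bounds_avg_det_general (N n M : ℕ) (μ J₀ : ℝ) (hμ : 0 < μ)
    (Θ : Matrix (Fin N) (Fin n) ℝ) (C : Fin M → Matrix (Fin N) (Fin n) ℝ)
    (hpos : ∀ i, (Θᵀ * C i + (C i)ᵀ * Θ - 1).PosDef)
    (hbar : (μ / M) * ∑ i, max 0 (-Real.log (Θᵀ * C i + (C i)ᵀ * Θ - 1).det) ≤ J₀) :
    (1 / M : ℝ) * ∑ i, (1 - |(Θᵀ * C i).det|) ≤ J₀ / (2 * μ) := by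
  set barrier : Fin M → ℝ := fun i ↦ max 0 (-Real.log (Θᵀ * C i + (C i)ᵀ * Θ - 1).det)
  have hpointwise : ∀ i, 1 - |(Θᵀ * C i).det| ≤ barrier i / 2 := by
    intro i
    have hG : (C i)ᵀ * Θ = (Θᵀ * C i)ᵀ := by rw [transpose_mul, transpose_transpose]
    have hGpos := hpos i
    rw [hG] at hGpos
    calc 1 - |(Θᵀ * C i).det| ≤ -Real.log (Θᵀ * C i + (C i)ᵀ * Θ - 1).det / 2 := by
          rw [hG]
          exact one_sub_abs_le_neg_log_div_two hGpos.det_pos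
            (det_add_transpose_sub_one_le_sq_det hGpos)
      _ ≤ barrier i / 2 := by gcongr; exact le_max_right _ _
  calc (1 / M : ℝ) * ∑ i, (1 - |(Θᵀ * C i).det|) ≤ (1 / M) * ∑ i, barrier i / 2 := by
        gcongr with i; exact hpointwise i
    _ = ((μ / M) * ∑ i, barrier i) / (2 * μ) := by
        rw [← Finset.sum_div]; field_simp
    _ ≤ J₀ / (2 * μ) := by gcongr

/-- If each `G⁽ⁱ⁾ := ΘᵀC⁽ⁱ⁾ + C⁽ⁱ⁾ᵀΘ − I` is positive definite and the barrier term
`(μ/M) Σᵢ max {0, −log det G⁽ⁱ⁾}` is at most `J∘`, then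
`(1/M) Σᵢ (1 − |det (ΘᵀC⁽ⁱ⁾)|) ≤ J∘ / (2μ)`. -/
theorem barrier_bounds_avg_det (N n M : ℕ) (hM : 0 < M) (μ J₀ : ℝ) (hμ : 0 < μ) (hJ : 0 ≤ J₀)
    (Θ : Matrix (Fin N) (Fin n) ℝ) (C : Fin M → Matrix (Fin N) (Fin n) ℝ)
    (hpos : ∀ i, (Θᵀ * C i + (C i)ᵀ * Θ - 1).PosDef)
    (hbar : (μ / M) * ∑ i, max 0 (-Real.log (Θᵀ * C i + (C i)ᵀ * Θ - 1).det) ≤ J₀) :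
    (1 / M : ℝ) * ∑ i, (1 - |(Θᵀ * C i).det|) ≤ J₀ / (2 * μ) :=
  barrier_bounds_avg_det_general N n M μ J₀ hμ Θ C hpos hbar
end

section
/- Given data matrices Φ_0, …, Φ_P ∈ ℝ^{M×N}, matrices C⁽¹⁾, …, C⁽ᴹ⁾ ∈ ℝ^{N×n}, a matrix Ā ∈ ℝ^{n×n}, and constants β ≥ 0 and μ > 0, suppose Θ ∈ ℝ^{N×n} is such that each ΘᵀC⁽ⁱ⁾ + C⁽ⁱ⁾ᵀΘ − I is positive definite and J_μ(Θ) ≤ J∘ for some J∘ with 0 ≤ J∘ < 2μ. Then the denominator (1/M)·Σ_{i=1}^{M} |det(ΘᵀC⁽ⁱ⁾)| is at least 1 − J∘/(2μ) > 0, and the scaled error satisfies L(Θ) ≤ √(2J∘) / (1 − J∘/(2μ)). -/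
open Matrix

/-- Squared Frobenius norm of a real matrix: `‖X‖_F² = Σᵢⱼ Xᵢⱼ²`. -/
noncomputable def frobSq {m n : ℕ} (X : Matrix (Fin m) (Fin n) ℝ) : ℝ :=
  ∑ i, ∑ j, X i j ^ 2

/-- The regularized barrier objective
`J_μ(Θ) = (1/(2MP)) Σₖ ‖Φ_kΘ − Φ_{k−1}ΘĀᵀ‖_F² + (β/2)‖Θ‖_F²
  + (μ/M) Σᵢ max{0, −log det(ΘᵀC⁽ⁱ⁾ + C⁽ⁱ⁾ᵀΘ − I)}`. -/
noncomputable def Jobj (M N n P : ℕ) (Φ : ℕ → Matrix (Fin M) (Fin N) ℝ)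
    (C : Fin M → Matrix (Fin N) (Fin n) ℝ) (Abar : Matrix (Fin n) (Fin n) ℝ)
    (β μ : ℝ) (Θ : Matrix (Fin N) (Fin n) ℝ) : ℝ :=
  (1 / (2 * M * P)) * ∑ k ∈ Finset.range P, frobSq (Φ (k + 1) * Θ - Φ k * Θ * Abarᵀ)
    + (β / 2) * frobSq Θ
    + (μ / M) * ∑ i, max 0 (-Real.log (Θᵀ * C i + (C i)ᵀ * Θ - 1).det)

/-- The scaled error
`L(Θ) = [ (1/(MP)) Σₖ ‖Φ_kΘ − Φ_{k−1}ΘĀᵀ‖_F² ]^{1/2} / [ (1/M) Σᵢ |det(ΘᵀC⁽ⁱ⁾)| ]`. -/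
noncomputable def Lscaled (M N n P : ℕ) (Φ : ℕ → Matrix (Fin M) (Fin N) ℝ)
    (C : Fin M → Matrix (Fin N) (Fin n) ℝ) (Abar : Matrix (Fin n) (Fin n) ℝ)
    (Θ : Matrix (Fin N) (Fin n) ℝ) : ℝ :=
  Real.sqrt ((1 / (M * P)) * ∑ k ∈ Finset.range P, frobSq (Φ (k + 1) * Θ - Φ k * Θ * Abarᵀ))
    / ((1 / M : ℝ) * ∑ i, |(Θᵀ * C i).det|)

/-!
Write `B = ΘᵀC⁽ⁱ⁾` and `S = B + Bᵀ − I`. Since `BᵀB − S = (B − I)ᵀ(B − I) ⪰ 0` and `S ≻ 0`,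
monotonicity of the determinant in the Loewner order gives `det S ≤ (det B)²`. With
`tᵢ = max{0, −log det S}` this yields `|det B| ≥ √(det S) ≥ exp(−tᵢ/2) ≥ 1 − tᵢ/2`; averaging over `i`
and using `(μ/M) Σ tᵢ ≤ J_μ(Θ) ≤ J∘` bounds the denominator of `L(Θ)` from below by `1 − J∘/(2μ)`,
while the data-fit term of `J_μ(Θ)` bounds its numerator by `√(2J∘)`.
-/

open scoped MatrixOrder

theorem one_sub_half_le_sqrt_of_neg_log_le {d t : ℝ} (hd : 0 < d) (ht : -Real.log d ≤ t) :
    1 - t / 2 ≤ Real.sqrt d :=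
  calc 1 - t / 2 ≤ Real.exp (-t / 2) := by linarith [Real.add_one_le_exp (-t / 2)]
    _ = Real.sqrt (Real.exp (-t)) := Real.exp_half _
    _ ≤ Real.sqrt d := by
      gcongr
      rw [← Real.exp_log hd]
      exact Real.exp_le_exp.mpr (by linarith)

namespace Matrix

variable {n : Type*} [Fintype n] [DecidableEq n]

theorem one_le_det_of_one_le {X : Matrix n n ℝ} (hX : 1 ≤ X) : 1 ≤ X.det := by
  have hXh : X.IsHermitian := by
    simpa using (le_iff.mp hX).isHermitian.add (isHermitian_one : (1 : Matrix n n ℝ).IsHermitian)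
  have hspec : ∀ x ∈ spectrum ℝ X, 1 ≤ x := (CFC.one_le_iff X hXh.isSelfAdjoint).mp hX
  rw [hXh.det_eq_prod_eigenvalues]
  exact Finset.one_le_prod fun i _ => by simpa using hspec _ (hXh.eigenvalues_mem_spectrum_real i)

theorem PosDef.det_le_det_of_le {A B : Matrix n n ℝ} (hA : A.PosDef) (hAB : A ≤ B) :
    A.det ≤ B.det := by
  set R := CFC.sqrt A
  have hRR : R * R = A := CFC.sqrt_mul_sqrt_self A hA.posSemidef.nonneg
  have hRself : star R = R := (CFC.sqrt_nonneg A).isSelfAdjoint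
  have hRunit : IsUnit R.det := by
    refine isUnit_iff_ne_zero.mpr fun h => hA.det_pos.ne' ?_
    rw [← hRR, det_mul, h, zero_mul]
  have hRinv : star R⁻¹ = R⁻¹ := by
    rw [star_eq_conjTranspose, conjTranspose_nonsing_inv, ← star_eq_conjTranspose, hRself]
  have hX : 1 ≤ R⁻¹ * B * R⁻¹ := by
    have h := star_left_conjugate_le_conjugate hAB R⁻¹
    rwa [hRinv, ← hRR, ← mul_assoc, nonsing_inv_mul _ hRunit, one_mul,
      mul_nonsing_inv _ hRunit] at h
  have hB : B = R * (R⁻¹ * B * R⁻¹) * R := by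
    rw [← mul_assoc, ← mul_assoc, mul_nonsing_inv _ hRunit, one_mul, mul_assoc,
      nonsing_inv_mul _ hRunit, mul_one]
  calc A.det = A.det * 1 := (mul_one _).symm
    _ ≤ A.det * (R⁻¹ * B * R⁻¹).det := by
      gcongr
      · exact hA.det_pos.le
      · exact one_le_det_of_one_le hX
    _ = (R * (R⁻¹ * B * R⁻¹) * R).det := by rw [← hRR]; simp only [det_mul]; ring
    _ = B.det := by rw [← hB]

theorem det_add_transpose_sub_one_le_det_sq {B : Matrix n n ℝ} (hS : (B + Bᵀ - 1).PosDef) :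
    (B + Bᵀ - 1).det ≤ B.det ^ 2 := by
  have hle : B + Bᵀ - 1 ≤ Bᵀ * B := by
    have h : Bᵀ * B - (B + Bᵀ - 1) = (B - 1)ᴴ * (B - 1) := by
      rw [conjTranspose_eq_transpose_of_trivial, transpose_sub, transpose_one]
      noncomm_ring
    rw [le_iff, h]
    exact posSemidef_conjTranspose_mul_self _
  calc (B + Bᵀ - 1).det ≤ (Bᵀ * B).det := hS.det_le_det_of_le hle
    _ = B.det ^ 2 := by rw [det_mul, det_transpose, sq]

theorem one_sub_half_max_neg_log_det_le_abs_det {B : Matrix n n ℝ} (hS : (B + Bᵀ - 1).PosDef) :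
    1 - max 0 (-Real.log (B + Bᵀ - 1).det) / 2 ≤ |B.det| :=
  calc 1 - max 0 (-Real.log (B + Bᵀ - 1).det) / 2 ≤ Real.sqrt (B + Bᵀ - 1).det :=
        one_sub_half_le_sqrt_of_neg_log_le hS.det_pos (le_max_right _ _)
    _ ≤ Real.sqrt (B.det ^ 2) := Real.sqrt_le_sqrt (det_add_transpose_sub_one_le_det_sq hS)
    _ = |B.det| := Real.sqrt_sq_eq_abs _

end Matrix

theorem one_sub_div_le_mean_of_one_sub_half_le {M : ℕ} (hM : 0 < M) {d t : Fin M → ℝ}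
    (hdt : ∀ i, 1 - t i / 2 ≤ d i) {μ J : ℝ} (hμ : 0 < μ) (hJ : μ / M * ∑ i, t i ≤ J) :
    1 - J / (2 * μ) ≤ (1 / M : ℝ) * ∑ i, d i := by
  have hM' : (0 : ℝ) < M := by exact_mod_cast hM
  have hsum : (M : ℝ) - (∑ i, t i) / 2 ≤ ∑ i, d i := by
    simpa [Finset.sum_sub_distrib, Finset.sum_div] using
      Finset.sum_le_sum fun i (_ : i ∈ Finset.univ) => hdt i
  have ht : (∑ i, t i) / (2 * M) ≤ J / (2 * μ) := by
    rw [div_mul_eq_mul_div, div_le_iff₀ hM'] at hJ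
    rw [div_le_div_iff₀ (by positivity) (by positivity)]
    linarith
  calc 1 - J / (2 * μ) ≤ 1 - (∑ i, t i) / (2 * M) := by linarith
    _ = (1 / M : ℝ) * ((M : ℝ) - (∑ i, t i) / 2) := by field_simp
    _ ≤ (1 / M : ℝ) * ∑ i, d i := by gcongr

theorem frobSq_nonneg {m n : ℕ} (X : Matrix (Fin m) (Fin n) ℝ) : 0 ≤ frobSq X :=
  Finset.sum_nonneg fun _ _ => Finset.sum_nonneg fun _ _ => sq_nonneg _

theorem scaled_error_bound_general (M N n P : ℕ) (hM : 0 < M)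
    (Φ : ℕ → Matrix (Fin M) (Fin N) ℝ) (C : Fin M → Matrix (Fin N) (Fin n) ℝ)
    (Abar : Matrix (Fin n) (Fin n) ℝ) (β μ J₀ : ℝ) (hβ : 0 ≤ β) (hμ : 0 < μ)
    (hJμ : J₀ < 2 * μ) (Θ : Matrix (Fin N) (Fin n) ℝ)
    (hpos : ∀ i, (Θᵀ * C i + (C i)ᵀ * Θ - 1).PosDef)
    (hobj : Jobj M N n P Φ C Abar β μ Θ ≤ J₀) :
    0 < 1 - J₀ / (2 * μ) ∧
    1 - J₀ / (2 * μ) ≤ (1 / M : ℝ) * ∑ i, |(Θᵀ * C i).det| ∧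
    Lscaled M N n P Φ C Abar Θ ≤ Real.sqrt (2 * J₀) / (1 - J₀ / (2 * μ)) := by
  set Q := ∑ k ∈ Finset.range P, frobSq (Φ (k + 1) * Θ - Φ k * Θ * Abarᵀ)
  set t : Fin M → ℝ := fun i => max 0 (-Real.log (Θᵀ * C i + (C i)ᵀ * Θ - 1).det)
  have hfit : 0 ≤ 1 / (2 * M * P : ℝ) * Q :=
    mul_nonneg (by positivity) (Finset.sum_nonneg fun _ _ => frobSq_nonneg _)
  have hreg : 0 ≤ β / 2 * frobSq Θ := mul_nonneg (by positivity) (frobSq_nonneg Θ)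
  have hbarrier : 0 ≤ μ / M * ∑ i, t i :=
    mul_nonneg (by positivity) (Finset.sum_nonneg fun _ _ => le_max_left _ _)
  have hsplit : 1 / (2 * M * P : ℝ) * Q + β / 2 * frobSq Θ + μ / M * ∑ i, t i ≤ J₀ := hobj
  have hgap : 0 < 1 - J₀ / (2 * μ) := by
    rw [sub_pos, div_lt_one (by positivity)]
    exact hJμ
  have hden : 1 - J₀ / (2 * μ) ≤ (1 / M : ℝ) * ∑ i, |(Θᵀ * C i).det| := by
    refine one_sub_div_le_mean_of_one_sub_half_le hM (fun i => ?_) hμ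
      ((le_add_of_nonneg_left (add_nonneg hfit hreg)).trans hsplit)
    have h := one_sub_half_max_neg_log_det_le_abs_det (B := Θᵀ * C i)
    rw [transpose_mul, transpose_transpose] at h
    exact h (hpos i)
  have hnum : 1 / (M * P : ℝ) * Q ≤ 2 * J₀ := by
    have h : 1 / (M * P : ℝ) * Q = 2 * (1 / (2 * M * P : ℝ) * Q) := by ring
    linarith
  exact ⟨hgap, hden, div_le_div₀ (Real.sqrt_nonneg _) (Real.sqrt_le_sqrt hnum) hgap hden⟩

/-- If each `ΘᵀC⁽ⁱ⁾ + C⁽ⁱ⁾ᵀΘ − I` is positive definite and `J_μ(Θ) ≤ J∘ < 2μ`, then the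
denominator `(1/M) Σᵢ |det(ΘᵀC⁽ⁱ⁾)|` is at least `1 − J∘/(2μ) > 0` and
`L(Θ) ≤ √(2J∘) / (1 − J∘/(2μ))`. -/
theorem scaled_error_bound (M N n P : ℕ) (hM : 0 < M) (hP : 0 < P)
    (Φ : ℕ → Matrix (Fin M) (Fin N) ℝ) (C : Fin M → Matrix (Fin N) (Fin n) ℝ)
    (Abar : Matrix (Fin n) (Fin n) ℝ) (β μ J₀ : ℝ) (hβ : 0 ≤ β) (hμ : 0 < μ)
    (hJ₀ : 0 ≤ J₀) (hJμ : J₀ < 2 * μ) (Θ : Matrix (Fin N) (Fin n) ℝ)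
    (hpos : ∀ i, (Θᵀ * C i + (C i)ᵀ * Θ - 1).PosDef)
    (hobj : Jobj M N n P Φ C Abar β μ Θ ≤ J₀) :
    0 < 1 - J₀ / (2 * μ) ∧
    1 - J₀ / (2 * μ) ≤ (1 / M : ℝ) * ∑ i, |(Θᵀ * C i).det| ∧
    Lscaled M N n P Φ C Abar Θ ≤ Real.sqrt (2 * J₀) / (1 - J₀ / (2 * μ)) :=
  scaled_error_bound_general M N n P hM Φ C Abar β μ J₀ hβ hμ hJμ Θ hpos hobj
end

section
/- Let Ā be a real n×n matrix whose operator norm (with respect to the Euclidean norm) is at most α for some α with 0 ≤ α < 1. Then for every P ≥ 1 and every finite sequence of vectors y_0, y_1, …, y_P ∈ ℝⁿ, Σ_{k=1}^{P} ‖y_k − Āᵏ y_0‖² ≤ (1 − α)⁻² · Σ_{k=1}^{P} ‖y_k − Ā y_{k−1}‖². -/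
/-!
The prediction error `e k = y (k + 1) - T ^ (k + 1) (y 0)` obeys the one-step recursion
`e (k + 1) = T (e k) + r (k + 1)`, `e 0 = r 0`, driven by the matching errors
`r k = y (k + 1) - T (y k)`. Since `‖T‖ ≤ α`, convexity of the square gives
`‖e (k + 1)‖² ≤ α ‖e k‖² + ‖r (k + 1)‖² / (1 - α)`; summing over `k` and absorbing the
`α`-multiple of the left-hand side yields `(1 - α) ∑ ‖e k‖² ≤ ∑ ‖r k‖² / (1 - α)`.
-/

theorem mul_add_sq_le_mul_sq_add_div {α : ℝ} (hα0 : 0 ≤ α) (hα1 : α < 1) (x y : ℝ) :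
    (α * x + y) ^ 2 ≤ α * x ^ 2 + y ^ 2 / (1 - α) := by
  -- Jensen for `t ↦ t²` at `α * x + (1 - α) * (y / (1 - α))`, with its exact gap
  have hα : 1 - α ≠ 0 := by linarith
  have hgap : α * x ^ 2 + y ^ 2 / (1 - α) - (α * x + y) ^ 2
      = α * ((1 - α) * x - y) ^ 2 / (1 - α) := by
    field_simp
    ring
  have : 0 ≤ α * ((1 - α) * x - y) ^ 2 / (1 - α) := by
    have : 0 < 1 - α := by linarith
    positivity
  linarith

theorem sum_range_sq_le_of_le_mul_add {α : ℝ} (hα0 : 0 ≤ α) (hα1 : α < 1) {u a : ℕ → ℝ}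
    (hu : ∀ k, 0 ≤ u k) (h₀ : u 0 ≤ a 0) (hstep : ∀ k, u (k + 1) ≤ α * u k + a (k + 1))
    (P : ℕ) :
    ∑ k ∈ Finset.range P, u k ^ 2 ≤ (1 - α)⁻¹ ^ 2 * ∑ k ∈ Finset.range P, a k ^ 2 := by
  have hα : 0 < 1 - α := by linarith
  have hterm : ∀ k, u (k + 1) ^ 2 ≤ α * u k ^ 2 + a (k + 1) ^ 2 / (1 - α) := fun k =>
    (pow_le_pow_left₀ (hu _) (hstep k) 2).trans (mul_add_sq_le_mul_sq_add_div hα0 hα1 _ _)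
  have hzero : u 0 ^ 2 ≤ a 0 ^ 2 / (1 - α) :=
    (pow_le_pow_left₀ (hu 0) h₀ 2).trans (le_div_self (sq_nonneg _) hα (by linarith))
  have hshift : ∑ k ∈ Finset.range P, u k ^ 2 ≤ α * ∑ k ∈ Finset.range P, u k ^ 2
      + (∑ k ∈ Finset.range P, a k ^ 2) / (1 - α) := by
    cases P with
    | zero => simp
    | succ P =>
      have hmono : ∑ k ∈ Finset.range P, u k ^ 2 ≤ ∑ k ∈ Finset.range (P + 1), u k ^ 2 :=
        Finset.sum_le_sum_of_subset_of_nonneg (Finset.range_subset_range.mpr P.le_succ)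
          fun _ _ _ => sq_nonneg _
      calc ∑ k ∈ Finset.range (P + 1), u k ^ 2
          = ∑ k ∈ Finset.range P, u (k + 1) ^ 2 + u 0 ^ 2 := Finset.sum_range_succ' _ _
        _ ≤ ∑ k ∈ Finset.range P, (α * u k ^ 2 + a (k + 1) ^ 2 / (1 - α))
              + a 0 ^ 2 / (1 - α) :=
          add_le_add (Finset.sum_le_sum fun k _ => hterm k) hzero
        _ = α * ∑ k ∈ Finset.range P, u k ^ 2
              + (∑ k ∈ Finset.range (P + 1), a k ^ 2) / (1 - α) := by
          rw [Finset.sum_range_succ' (fun k => a k ^ 2), Finset.sum_add_distrib, Finset.mul_sum,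
            add_div, Finset.sum_div, add_assoc]
        _ ≤ _ := by gcongr
  have hcontract : (1 - α) * ∑ k ∈ Finset.range P, u k ^ 2
      ≤ (∑ k ∈ Finset.range P, a k ^ 2) / (1 - α) := by linarith
  rw [inv_pow, ← div_eq_inv_mul, le_div_iff₀ (by positivity)]
  calc (∑ k ∈ Finset.range P, u k ^ 2) * (1 - α) ^ 2
      = (1 - α) * (∑ k ∈ Finset.range P, u k ^ 2) * (1 - α) := by ring
    _ ≤ (∑ k ∈ Finset.range P, a k ^ 2) / (1 - α) * (1 - α) := by gcongr
    _ = ∑ k ∈ Finset.range P, a k ^ 2 := div_mul_cancel₀ _ hα.ne'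

theorem ContinuousLinearMap.sum_norm_sub_pow_apply_sq_le {𝕜 E : Type*}
    [NontriviallyNormedField 𝕜] [SeminormedAddCommGroup E] [NormedSpace 𝕜 E] (T : E →L[𝕜] E)
    {α : ℝ} (hα0 : 0 ≤ α) (hα1 : α < 1) (hT : ‖T‖ ≤ α) (y : ℕ → E) (P : ℕ) :
    ∑ k ∈ Finset.range P, ‖y (k + 1) - (T ^ (k + 1)) (y 0)‖ ^ 2
      ≤ (1 - α)⁻¹ ^ 2 * ∑ k ∈ Finset.range P, ‖y (k + 1) - T (y k)‖ ^ 2 := by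
  have hrec : ∀ k, y (k + 2) - (T ^ (k + 2)) (y 0)
      = (y (k + 2) - T (y (k + 1))) + T (y (k + 1) - (T ^ (k + 1)) (y 0)) := fun k => by
    rw [pow_succ' T (k + 1), mul_apply_eq_comp, map_sub]
    abel
  refine sum_range_sq_le_of_le_mul_add hα0 hα1 (fun _ => norm_nonneg _) (by simp) (fun k => ?_) P
  rw [hrec]
  calc _ ≤ ‖y (k + 2) - T (y (k + 1))‖ + ‖T (y (k + 1) - (T ^ (k + 1)) (y 0))‖ :=
        norm_add_le _ _
    _ ≤ ‖y (k + 2) - T (y (k + 1))‖ + α * ‖y (k + 1) - (T ^ (k + 1)) (y 0)‖ := by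
      gcongr
      exact T.le_of_opNorm_le hT _
    _ = _ := add_comm _ _

theorem l2_gain_cumulative_prediction_bound_general (n : ℕ) (Abar : Matrix (Fin n) (Fin n) ℝ)
    (α : ℝ) (hα0 : 0 ≤ α) (hα1 : α < 1)
    (hnorm : ‖Matrix.toEuclideanCLM (𝕜 := ℝ) Abar‖ ≤ α)
    (P : ℕ) (y : ℕ → EuclideanSpace ℝ (Fin n)) :
    ∑ k ∈ Finset.range P,
        ‖y (k + 1) - Matrix.toEuclideanCLM (𝕜 := ℝ) (Abar ^ (k + 1)) (y 0)‖ ^ 2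
      ≤ (1 - α)⁻¹ ^ 2 *
        ∑ k ∈ Finset.range P,
          ‖y (k + 1) - Matrix.toEuclideanCLM (𝕜 := ℝ) Abar (y k)‖ ^ 2 := by
  simp only [map_pow]
  exact (Matrix.toEuclideanCLM (𝕜 := ℝ) Abar).sum_norm_sub_pow_apply_sq_le hα0 hα1 hnorm y P

/-- ℓ₂-gain bound for a stable discrete-time linear system: if the Euclidean operator norm
of `Ā` is at most `α < 1`, then for any vectors `y₀, …, y_P`,
`Σ_{k=1}^P ‖y_k − Āᵏ y₀‖² ≤ (1 − α)⁻² Σ_{k=1}^P ‖y_k − Ā y_{k−1}‖²`. -/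
theorem l2_gain_cumulative_prediction_bound (n : ℕ) (Abar : Matrix (Fin n) (Fin n) ℝ)
    (α : ℝ) (hα0 : 0 ≤ α) (hα1 : α < 1)
    (hnorm : ‖Matrix.toEuclideanCLM (𝕜 := ℝ) Abar‖ ≤ α)
    (P : ℕ) (hP : 1 ≤ P) (y : ℕ → EuclideanSpace ℝ (Fin n)) :
    ∑ k ∈ Finset.range P,
        ‖y (k + 1) - Matrix.toEuclideanCLM (𝕜 := ℝ) (Abar ^ (k + 1)) (y 0)‖ ^ 2
      ≤ (1 - α)⁻¹ ^ 2 *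
        ∑ k ∈ Finset.range P,
          ‖y (k + 1) - Matrix.toEuclideanCLM (𝕜 := ℝ) Abar (y k)‖ ^ 2 :=
  l2_gain_cumulative_prediction_bound_general n Abar α hα0 hα1 hnorm P y
end

section
/- Let (X, Σ) be a measurable space, ρ a probability measure on X, T_0 = id and T_1, …, T_P : X → X measurable maps, h : X → ℝⁿ a measurable map, and Ā a real n×n matrix. Define g(x) := (1/P)·Σ_{k=1}^{P} ‖h(T_k x) − Ā h(T_{k−1} x)‖² and let d : X → ℝ be measurable. Assume 0 ≤ g(x) ≤ F and 0 ≤ d(x) ≤ H for all x ∈ X, with F, H > 0. Fix L ≥ 0, δ₁, δ₂ ∈ (0,1), and M ≥ 1. Then, with respect to the M-fold product measure ρ^{⊗M} on X^M, the set of samples (x₁, …, x_M) for which the following implication holds has measure at least 1 − δ₁ − δ₂: if (1/M)·Σ_{i=1}^{M} g(x_i) ≤ L² · ((1/M)·Σ_{i=1}^{M} d(x_i))², then ∫ g dρ ≤ L² · (∫ d dρ + H·√(log(1/δ₂)/(2M)))² + F·√(log(1/δ₁)/(2M)). -/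
/-!
By Hoeffding's lemma each centred sample `f (xᵢ) - ∫ f dρ` of a function with values in `[a, b]`
is sub-Gaussian with parameter `((b - a) / 2) ^ 2`; the coordinates are independent under
`ρ^⊗M`, so the centred sum is sub-Gaussian with parameter `M ((b - a) / 2) ^ 2`, and the Chernoff
bound controls either tail of the sample mean at radius `(b - a) √(log (1 / δ) / (2 M))` with
probability `δ`. Off the two bad events (sample mean of `g` too small, of `d` too large), the
empirical inequality transfers to the population one because `t ↦ L² t²` is monotone on `t ≥ 0`.
-/

open MeasureTheory ProbabilityTheory

open scoped NNReal

namespace ProbabilityTheory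

variable {X ι : Type*} [MeasurableSpace X] {ρ : Measure X} [IsProbabilityMeasure ρ] [Fintype ι]
  {f : X → ℝ} {a b : ℝ}

lemma hasSubgaussianMGF_sum_pi_sub_integral (hf : AEMeasurable f ρ)
    (hab : ∀ᵐ x ∂ρ, f x ∈ Set.Icc a b) :
    HasSubgaussianMGF (fun xs : ι → X ↦ ∑ i, (f (xs i) - ∫ x, f x ∂ρ))
      (Fintype.card ι * (‖b - a‖₊ / 2) ^ 2) (Measure.pi fun _ ↦ ρ) := by
  have hcentered : AEMeasurable (fun x ↦ f x - ∫ x, f x ∂ρ) ρ := hf.sub_const _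
  have hcomponent (i : ι) : HasSubgaussianMGF (fun xs : ι → X ↦ f (xs i) - ∫ x, f x ∂ρ)
      ((‖b - a‖₊ / 2) ^ 2) (Measure.pi fun _ ↦ ρ) := by
    have hmap : (Measure.pi fun _ ↦ ρ).map (fun xs : ι → X ↦ xs i) = ρ :=
      (measurePreserving_eval _ i).map_eq
    refine HasSubgaussianMGF.of_map (X := fun x ↦ f x - ∫ x, f x ∂ρ)
      (measurable_pi_apply i).aemeasurable ?_
    rw [hmap]
    exact hasSubgaussianMGF_of_mem_Icc hf hab
  simpa using HasSubgaussianMGF.sum_of_iIndepFun (iIndepFun_pi fun _ ↦ hcentered)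
    (s := Finset.univ) fun i _ ↦ hcomponent i

lemma HasSubgaussianMGF.measure_sqrt_log_le_le {Ω : Type*} [MeasurableSpace Ω] {μ : Measure Ω}
    [IsFiniteMeasure μ] {Y : Ω → ℝ} {c : ℝ≥0} (h : HasSubgaussianMGF Y c μ) (hc : c ≠ 0)
    {δ : ℝ} (hδ₀ : 0 < δ) (hδ₁ : δ ≤ 1) :
    μ {ω | √(2 * c * Real.log (1 / δ)) ≤ Y ω} ≤ ENNReal.ofReal δ := by
  have hlog : 0 ≤ Real.log (1 / δ) := Real.log_nonneg (one_le_one_div hδ₀ hδ₁)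
  have hc' : (0 : ℝ) < c := by positivity
  have hexponent : -√(2 * c * Real.log (1 / δ)) ^ 2 / (2 * c) = Real.log δ := by
    rw [Real.sq_sqrt (by positivity), one_div, Real.log_inv]
    field_simp
  have hbound := h.measure_ge_le (Real.sqrt_nonneg (2 * c * Real.log (1 / δ)))
  rw [hexponent, Real.exp_log hδ₀] at hbound
  rw [← ofReal_measureReal]
  exact ENNReal.ofReal_le_ofReal hbound

lemma measure_pi_integral_add_le_sampleMean_le [Nonempty ι] (hf : AEMeasurable f ρ)
    (hab : ∀ᵐ x ∂ρ, f x ∈ Set.Icc a b) (hlt : a < b) {δ : ℝ} (hδ₀ : 0 < δ) (hδ₁ : δ ≤ 1) :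
    Measure.pi (fun _ ↦ ρ) {xs : ι → X | ∫ x, f x ∂ρ +
        (b - a) * √(Real.log (1 / δ) / (2 * Fintype.card ι)) ≤
          (1 / Fintype.card ι : ℝ) * ∑ i, f (xs i)} ≤ ENNReal.ofReal δ := by
  have hN : (0 : ℝ) < Fintype.card ι := by positivity
  have hc : (Fintype.card ι * (‖b - a‖₊ / 2) ^ 2 : ℝ≥0) ≠ 0 := by
    simp [sub_ne_zero.mpr hlt.ne']
  have hradius : √(2 * ↑(Fintype.card ι * (‖b - a‖₊ / 2) ^ 2 : ℝ≥0) * Real.log (1 / δ)) =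
      Fintype.card ι * ((b - a) * √(Real.log (1 / δ) / (2 * Fintype.card ι))) := by
    have hlog : 0 ≤ Real.log (1 / δ) := Real.log_nonneg (one_le_one_div hδ₀ hδ₁)
    have hwidth : 0 < b - a := sub_pos.mpr hlt
    rw [Real.sqrt_eq_iff_eq_sq (by positivity) (by positivity), mul_pow, mul_pow,
      Real.sq_sqrt (by positivity)]
    push_cast
    rw [Real.norm_eq_abs, abs_of_pos hwidth]
    field_simp
  refine le_trans (measure_mono fun xs hxs ↦ ?_)
    ((hasSubgaussianMGF_sum_pi_sub_integral hf hab).measure_sqrt_log_le_le hc hδ₀ hδ₁)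
  simp only [Set.mem_ofPred_eq, hradius, Finset.sum_sub_distrib, Finset.sum_const,
    Finset.card_univ, nsmul_eq_mul] at hxs ⊢
  rw [one_div_mul_eq_div, le_div_iff₀ hN] at hxs
  linarith

lemma measure_pi_sampleMean_le_integral_sub_le [Nonempty ι] (hf : AEMeasurable f ρ)
    (hab : ∀ᵐ x ∂ρ, f x ∈ Set.Icc a b) (hlt : a < b) {δ : ℝ} (hδ₀ : 0 < δ) (hδ₁ : δ ≤ 1) :
    Measure.pi (fun _ ↦ ρ) {xs : ι → X | (1 / Fintype.card ι : ℝ) * ∑ i, f (xs i) ≤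
        ∫ x, f x ∂ρ - (b - a) * √(Real.log (1 / δ) / (2 * Fintype.card ι))} ≤
      ENNReal.ofReal δ := by
  have hneg := measure_pi_integral_add_le_sampleMean_le (ι := ι) hf.neg
    (hab.mono fun x hx ↦ ⟨neg_le_neg hx.2, neg_le_neg hx.1⟩) (neg_lt_neg hlt) hδ₀ hδ₁
  refine le_trans (measure_mono fun xs hxs ↦ ?_) hneg
  simp only [Set.mem_ofPred_eq, Pi.neg_apply, integral_neg, Finset.sum_neg_distrib,
    neg_sub_neg] at hxs ⊢
  linarith

end ProbabilityTheory

lemma MeasureTheory.ofReal_one_sub_sub_le_measure_compl_union {Ω : Type*} [MeasurableSpace Ω]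
    {μ : Measure Ω} [IsProbabilityMeasure μ] {A B : Set Ω} {δ₁ δ₂ : ℝ} (hδ₁ : 0 ≤ δ₁)
    (hδ₂ : 0 ≤ δ₂) (hA : μ A ≤ ENNReal.ofReal δ₁) (hB : μ B ≤ ENNReal.ofReal δ₂) :
    ENNReal.ofReal (1 - δ₁ - δ₂) ≤ μ (A ∪ B)ᶜ := by
  have hcover : 1 ≤ μ (A ∪ B) + μ (A ∪ B)ᶜ := by
    rw [← measure_univ (μ := μ), ← Set.union_compl_self (A ∪ B)]
    exact measure_union_le _ _
  calc ENNReal.ofReal (1 - δ₁ - δ₂)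
      = 1 - (ENNReal.ofReal δ₁ + ENNReal.ofReal δ₂) := by
        rw [sub_sub, ENNReal.ofReal_sub _ (add_nonneg hδ₁ hδ₂), ENNReal.ofReal_one,
          ENNReal.ofReal_add hδ₁ hδ₂]
    _ ≤ 1 - μ (A ∪ B) := tsub_le_tsub_left ((measure_union_le A B).trans (add_le_add hA hB)) 1
    _ ≤ μ (A ∪ B)ᶜ := tsub_le_iff_left.mpr hcover

theorem generalization_bound_general
    {X : Type*} [MeasurableSpace X] (ρ : Measure X) [IsProbabilityMeasure ρ]
    (P : ℕ) (T : ℕ → X → X) (hTmeas : ∀ k, Measurable (T k))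
    (n : ℕ) (h : X → EuclideanSpace ℝ (Fin n)) (hmeas : Measurable h)
    (Abar : Matrix (Fin n) (Fin n) ℝ)
    (g d : X → ℝ)
    (hg : g = fun x => (1 / P : ℝ) * ∑ k ∈ Finset.range P,
        ‖h (T (k + 1) x) - Matrix.toEuclideanCLM (𝕜 := ℝ) Abar (h (T k x))‖ ^ 2)
    (hdmeas : Measurable d)
    (F H : ℝ) (hF : 0 < F) (hH : 0 < H)
    (hgF : ∀ x, 0 ≤ g x ∧ g x ≤ F) (hdH : ∀ x, 0 ≤ d x ∧ d x ≤ H)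
    (L : ℝ)
    (δ₁ δ₂ : ℝ) (hδ₁ : δ₁ ∈ Set.Ioo (0 : ℝ) 1) (hδ₂ : δ₂ ∈ Set.Ioo (0 : ℝ) 1)
    (M : ℕ) (hM : 1 ≤ M) :
    ENNReal.ofReal (1 - δ₁ - δ₂) ≤
      Measure.pi (fun _ : Fin M => ρ)
        {xs : Fin M → X |
          (1 / M : ℝ) * ∑ i, g (xs i) ≤ L ^ 2 * ((1 / M : ℝ) * ∑ i, d (xs i)) ^ 2 →
          ∫ x, g x ∂ρ ≤
            L ^ 2 * (∫ x, d x ∂ρ + H * Real.sqrt (Real.log (1 / δ₂) / (2 * M))) ^ 2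
              + F * Real.sqrt (Real.log (1 / δ₁) / (2 * M))} := by
  have hgmeas : Measurable g := by subst hg; fun_prop
  have : NeZero M := ⟨by omega⟩
  have hlow := measure_pi_sampleMean_le_integral_sub_le (ι := Fin M) hgmeas.aemeasurable
    (ae_of_all ρ hgF) hF hδ₁.1 hδ₁.2.le
  have hup := measure_pi_integral_add_le_sampleMean_le (ι := Fin M) hdmeas.aemeasurable
    (ae_of_all ρ hdH) hH hδ₂.1 hδ₂.2.le
  rw [Fintype.card_fin, sub_zero] at hlow hup
  refine (ofReal_one_sub_sub_le_measure_compl_union hδ₁.1.le hδ₂.1.le hlow hup).trans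
    (measure_mono fun xs hxs hempirical ↦ ?_)
  simp only [Set.compl_union, Set.mem_inter_iff, Set.mem_compl_iff, Set.mem_ofPred_eq,
    not_le] at hxs
  have hmean_d : 0 ≤ (1 / M : ℝ) * ∑ i, d (xs i) :=
    mul_nonneg (by positivity) (Finset.sum_nonneg fun i _ ↦ (hdH (xs i)).1)
  calc ∫ x, g x ∂ρ
      ≤ (1 / M : ℝ) * ∑ i, g (xs i) + F * √(Real.log (1 / δ₁) / (2 * M)) := by linarith [hxs.1]
    _ ≤ L ^ 2 * ((1 / M : ℝ) * ∑ i, d (xs i)) ^ 2 + F * √(Real.log (1 / δ₁) / (2 * M)) := by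
        linarith [hempirical]
    _ ≤ L ^ 2 * (∫ x, d x ∂ρ + H * √(Real.log (1 / δ₂) / (2 * M))) ^ 2
          + F * √(Real.log (1 / δ₁) / (2 * M)) := by
        have := hxs.2.le
        gcongr

/-- Generalization bound (Theorem 3 of the paper): with probability at least `1 − δ₁ − δ₂`
over an i.i.d. sample `x₁, …, x_M ~ ρ`, if the empirical scaled-MSE inequality
`(1/M) Σᵢ g(xᵢ) ≤ L² ((1/M) Σᵢ d(xᵢ))²` holds, then
`∫ g dρ ≤ L² (∫ d dρ + H √(log(1/δ₂)/(2M)))² + F √(log(1/δ₁)/(2M))`. -/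
theorem generalization_bound
    {X : Type*} [MeasurableSpace X] (ρ : Measure X) [IsProbabilityMeasure ρ]
    (P : ℕ) (hP : 0 < P) (T : ℕ → X → X) (hT0 : T 0 = id) (hTmeas : ∀ k, Measurable (T k))
    (n : ℕ) (h : X → EuclideanSpace ℝ (Fin n)) (hmeas : Measurable h)
    (Abar : Matrix (Fin n) (Fin n) ℝ)
    (g d : X → ℝ)
    (hg : g = fun x => (1 / P : ℝ) * ∑ k ∈ Finset.range P,
        ‖h (T (k + 1) x) - Matrix.toEuclideanCLM (𝕜 := ℝ) Abar (h (T k x))‖ ^ 2)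
    (hdmeas : Measurable d)
    (F H : ℝ) (hF : 0 < F) (hH : 0 < H)
    (hgF : ∀ x, 0 ≤ g x ∧ g x ≤ F) (hdH : ∀ x, 0 ≤ d x ∧ d x ≤ H)
    (L : ℝ) (hL : 0 ≤ L)
    (δ₁ δ₂ : ℝ) (hδ₁ : δ₁ ∈ Set.Ioo (0 : ℝ) 1) (hδ₂ : δ₂ ∈ Set.Ioo (0 : ℝ) 1)
    (M : ℕ) (hM : 1 ≤ M) :
    ENNReal.ofReal (1 - δ₁ - δ₂) ≤
      Measure.pi (fun _ : Fin M => ρ)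
        {xs : Fin M → X |
          (1 / M : ℝ) * ∑ i, g (xs i) ≤ L ^ 2 * ((1 / M : ℝ) * ∑ i, d (xs i)) ^ 2 →
          ∫ x, g x ∂ρ ≤
            L ^ 2 * (∫ x, d x ∂ρ + H * Real.sqrt (Real.log (1 / δ₂) / (2 * M))) ^ 2
              + F * Real.sqrt (Real.log (1 / δ₁) / (2 * M))} :=
  generalization_bound_general ρ P T hTmeas n h hmeas Abar g d hg hdmeas F H hF hH hgF hdH L δ₁ δ₂
    hδ₁ hδ₂ M hM
end

section
/- Let (X, Σ) be a measurable space, ρ a probability measure on X, T_0 = id and T_1, …, T_P : X → X measurable maps, h : X → ℝⁿ a measurable map, and Ā a real n×n matrix whose operator norm (with respect to the Euclidean norm) is at most α for some α with 0 ≤ α < 1. Define g(x) := (1/P)·Σ_{k=1}^{P} ‖h(T_k x) − Ā h(T_{k−1} x)‖² and g̃(x) := (1/P)·Σ_{k=1}^{P} ‖h(T_k x) − Āᵏ h(x)‖², and let d : X → ℝ be measurable. Assume 0 ≤ g(x) ≤ F and 0 ≤ d(x) ≤ H for all x ∈ X, with F, H > 0. Fix L ≥ 0, δ₁, δ₂ ∈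 (0,1), and M ≥ 1. Then, with respect to the M-fold product measure ρ^{⊗M} on X^M, the set of samples (x₁, …, x_M) for which the following implication holds has measure at least 1 − δ₁ − δ₂: if (1/M)·Σ_{i=1}^{M} g(x_i) ≤ L² · ((1/M)·Σ_{i=1}^{M} d(x_i))², then ∫ g̃ dρ ≤ (1 − α)⁻² · [ L² · (∫ d dρ + H·√(log(1/δ₂)/(2M)))² + F·√(log(1/δ₁)/(2M)) ]. -/
/-!
Writing `e_j = h(T_{j+1} x) - Ā h(T_j x)` for the one-step residuals, the `k`-step error is the
convolution `h(T_{k+1} x) - Ā^{k+1} h(x) = ∑_{j ≤ k} Ā^{k-j} e_j`. Since `‖Ā‖ ≤ α < 1`, convolving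
with the kernel `α^m` has ℓ₂-gain at most `∑ α^m ≤ (1 - α)⁻¹`, so `g̃ ≤ (1 - α)⁻² g` pointwise.
Hoeffding's inequality bounds, each with probability at least `1 - δᵢ`, the deviation of `∫ g dρ`
above the empirical mean of `g` and of the empirical mean of `d` above `∫ d dρ`; on the
intersection of the two events the empirical inequality transfers to the population.
-/

open Matrix MeasureTheory

open Finset Real ProbabilityTheory

theorem geom_sum_le_inv_one_sub {α : ℝ} (hα0 : 0 ≤ α) (hα1 : α < 1) (N : ℕ) :
    ∑ i ∈ range N, α ^ i ≤ (1 - α)⁻¹ := by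
  rw [Finset.range_eq_Ico, ← one_div, ← pow_zero α]
  exact geom_sum_Ico_le_of_lt_one hα0 hα1

theorem sum_sq_sum_range_pow_sub_mul_le {α : ℝ} (hα0 : 0 ≤ α) (hα1 : α < 1) (a : ℕ → ℝ)
    (P : ℕ) :
    ∑ k ∈ range P, (∑ j ∈ range (k + 1), α ^ (k - j) * a j) ^ 2 ≤
      (1 - α)⁻¹ ^ 2 * ∑ j ∈ range P, a j ^ 2 := by
  have hweights (k : ℕ) : ∑ j ∈ range (k + 1), α ^ (k - j) ≤ (1 - α)⁻¹ := by
    rw [← sum_range_reflect]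
    refine (sum_congr rfl fun j hj => ?_).trans_le (geom_sum_le_inv_one_sub hα0 hα1 (k + 1))
    have := mem_range.1 hj
    congr 1
    omega
  have hswap : ∑ k ∈ range P, ∑ j ∈ range (k + 1), α ^ (k - j) * a j ^ 2 =
      ∑ j ∈ range P, ∑ k ∈ Ico j P, α ^ (k - j) * a j ^ 2 := by
    simpa only [range_eq_Ico] using (sum_Ico_Ico_comm 0 P fun j k => α ^ (k - j) * a j ^ 2).symm
  calc ∑ k ∈ range P, (∑ j ∈ range (k + 1), α ^ (k - j) * a j) ^ 2
      ≤ ∑ k ∈ range P, (1 - α)⁻¹ * ∑ j ∈ range (k + 1), α ^ (k - j) * a j ^ 2 := by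
        gcongr with k
        -- Cauchy–Schwarz with weights `α ^ (k - j)`
        refine (sum_sq_le_sum_mul_sum_of_sq_le_mul _ (f := fun j => α ^ (k - j))
          (g := fun j => α ^ (k - j) * a j ^ 2) (fun j _ => by positivity)
          (fun j _ => by positivity) fun j _ => le_of_eq (by ring)).trans ?_
        gcongr
        exact hweights k
    _ = (1 - α)⁻¹ * ∑ j ∈ range P, a j ^ 2 * ∑ k ∈ Ico j P, α ^ (k - j) := by
        rw [← mul_sum, hswap]
        simp only [mul_sum, mul_comm]
    _ ≤ (1 - α)⁻¹ * ∑ j ∈ range P, a j ^ 2 * (1 - α)⁻¹ := by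
        gcongr with j
        rw [sum_Ico_eq_sum_range]
        simpa using geom_sum_le_inv_one_sub hα0 hα1 (P - j)
    _ = (1 - α)⁻¹ ^ 2 * ∑ j ∈ range P, a j ^ 2 := by
        rw [← sum_mul]; ring

section Iterates

variable {E : Type*} [NormedAddCommGroup E] [NormedSpace ℝ E] (B : E →L[ℝ] E)

theorem sub_pow_succ_apply_eq_sum (z : ℕ → E) (k : ℕ) :
    z (k + 1) - (B ^ (k + 1)) (z 0) =
      ∑ j ∈ range (k + 1), (B ^ (k - j)) (z (j + 1) - B (z j)) := by
  have hterm : ∀ j ∈ range (k + 1), (B ^ (k - j)) (z (j + 1) - B (z j)) =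
      (B ^ (k + 1 - (j + 1))) (z (j + 1)) - (B ^ (k + 1 - j)) (z j) := by
    intro j hj
    have : k + 1 - j = k - j + 1 := by have := mem_range.1 hj; omega
    rw [this, Nat.add_sub_add_right, pow_succ, mul_apply_eq_comp, map_sub]
  rw [sum_congr rfl hterm, sum_range_sub (fun j => (B ^ (k + 1 - j)) (z j))]
  simp

variable {B} {α : ℝ}

theorem norm_pow_apply_le (hB : ‖B‖ ≤ α) (m : ℕ) (v : E) : ‖(B ^ m) v‖ ≤ α ^ m * ‖v‖ := by
  induction m generalizing v with
  | zero => simp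
  | succ m ih =>
    calc ‖(B ^ (m + 1)) v‖ = ‖(B ^ m) (B v)‖ := by rw [pow_succ, mul_apply_eq_comp]
      _ ≤ α ^ m * (α * ‖v‖) := by
        grw [ih, B.le_of_opNorm_le hB v]
        exact pow_nonneg ((norm_nonneg B).trans hB) m
      _ = α ^ (m + 1) * ‖v‖ := by ring

theorem sum_norm_sub_pow_succ_apply_sq_le (hB : ‖B‖ ≤ α) (hα1 : α < 1) (z : ℕ → E) (P : ℕ) :
    ∑ k ∈ range P, ‖z (k + 1) - (B ^ (k + 1)) (z 0)‖ ^ 2 ≤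
      (1 - α)⁻¹ ^ 2 * ∑ k ∈ range P, ‖z (k + 1) - B (z k)‖ ^ 2 := by
  refine le_trans ?_ (sum_sq_sum_range_pow_sub_mul_le ((norm_nonneg B).trans hB) hα1
    (fun j => ‖z (j + 1) - B (z j)‖) P)
  gcongr with k
  rw [sub_pow_succ_apply_eq_sum]
  exact (norm_sum_le _ _).trans (sum_le_sum fun j _ => norm_pow_apply_le hB _ _)

end Iterates

section SampleMean

variable {Ω : Type*} [MeasurableSpace Ω] {ρ : Measure Ω} [IsProbabilityMeasure ρ] {f : Ω → ℝ}
  {a b : ℝ} {M : ℕ} {δ : ℝ}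

theorem measureReal_pi_le_sampleMean_sub_integral (hf : AEMeasurable f ρ)
    (hfab : ∀ᵐ x ∂ρ, f x ∈ Set.Icc a b) (hab : a < b) (hM : 0 < M) (hδ0 : 0 < δ) (hδ1 : δ ≤ 1) :
    (Measure.pi fun _ : Fin M => ρ).real
        {xs | (b - a) * √(log (1 / δ) / (2 * M)) ≤ (1 / M : ℝ) * ∑ i, f (xs i) - ∫ x, f x ∂ρ}
      ≤ δ := by
  set ε := (b - a) * √(log (1 / δ) / (2 * M))
  have hM' : (0 : ℝ) < M := by exact_mod_cast hM
  have hlog : 0 ≤ log (1 / δ) := log_nonneg (by rw [le_div_iff₀ hδ0]; simpa using hδ1)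
  have hset : {xs : Fin M → Ω | ε ≤ (1 / M : ℝ) * ∑ i, f (xs i) - ∫ x, f x ∂ρ} =
      {xs | M * ε ≤ ∑ i, (f (xs i) - ∫ x, f x ∂ρ)} := by
    ext xs
    simp only [Set.mem_ofPred_eq, sum_sub_distrib, sum_const, card_univ, Fintype.card_fin,
      nsmul_eq_mul]
    rw [← mul_le_mul_iff_right₀ hM']
    field_simp
  have hsubG (i : Fin M) : HasSubgaussianMGF (fun xs : Fin M → Ω => f (xs i) - ∫ x, f x ∂ρ)
      ((‖b - a‖₊ / 2) ^ 2) (Measure.pi fun _ => ρ) := by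
    have heval := measurePreserving_eval (fun _ : Fin M => ρ) i
    have h : HasSubgaussianMGF (fun x => f x - ∫ x, f x ∂ρ) ((‖b - a‖₊ / 2) ^ 2)
        ((Measure.pi fun _ => ρ).map (Function.eval i)) := by
      rw [heval.map_eq]
      exact hasSubgaussianMGF_of_mem_Icc hf hfab
    exact h.of_map heval.measurable.aemeasurable
  have hindep : iIndepFun (fun (i : Fin M) (xs : Fin M → Ω) => f (xs i) - ∫ x, f x ∂ρ)
      (Measure.pi fun _ => ρ) :=
    iIndepFun_pi fun _ => hf.sub_const _
  rw [hset]
  refine (HasSubgaussianMGF.measure_sum_ge_le_of_iIndepFun hindep (fun i _ => hsubG i)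
    (by positivity)).trans_eq ?_
  -- Hoeffding's exponent `2 M ε² / (b - a)²` equals `log (1 / δ)` for this `ε`
  have hnorm : ((‖b - a‖₊ : NNReal) : ℝ) = b - a := by
    rw [coe_nnnorm, Real.norm_of_nonneg (by linarith)]
  simp only [sum_const, card_univ, Fintype.card_fin, nsmul_eq_mul, NNReal.coe_mul,
    NNReal.coe_natCast, NNReal.coe_pow, NNReal.coe_div, hnorm, NNReal.coe_ofNat, ε, mul_pow,
    sq_sqrt (div_nonneg hlog (by positivity : (0 : ℝ) ≤ 2 * M))]
  conv_rhs => rw [← exp_log hδ0]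
  congr 1
  rw [one_div, log_inv]
  have : b - a ≠ 0 := by linarith
  field_simp

theorem measureReal_pi_le_integral_sub_sampleMean (hf : AEMeasurable f ρ)
    (hfab : ∀ᵐ x ∂ρ, f x ∈ Set.Icc a b) (hab : a < b) (hM : 0 < M) (hδ0 : 0 < δ) (hδ1 : δ ≤ 1) :
    (Measure.pi fun _ : Fin M => ρ).real
        {xs | (b - a) * √(log (1 / δ) / (2 * M)) ≤ ∫ x, f x ∂ρ - (1 / M : ℝ) * ∑ i, f (xs i)}
      ≤ δ := by
  convert measureReal_pi_le_sampleMean_sub_integral (f := fun x => -f x) hf.neg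
    (hfab.mono fun x hx => ⟨neg_le_neg hx.2, neg_le_neg hx.1⟩) (neg_lt_neg hab) hM hδ0 hδ1
    using 4 with xs
  simp only [integral_neg, sum_neg_distrib]
  ring_nf

end SampleMean

theorem ofReal_one_sub_sub_le_measure {Ω : Type*} [MeasurableSpace Ω] {μ : Measure Ω}
    [IsProbabilityMeasure μ] {A B S : Set Ω} {δ₁ δ₂ : ℝ} (hA : μ.real A ≤ δ₁)
    (hB : μ.real B ≤ δ₂) (hS : (A ∪ B)ᶜ ⊆ S) :
    ENNReal.ofReal (1 - δ₁ - δ₂) ≤ μ S := by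
  rw [← ofReal_measureReal]
  refine ENNReal.ofReal_le_ofReal ?_
  have hcover : Set.univ ⊆ A ∪ B ∪ S := fun ω _ => by
    by_cases hω : ω ∈ A ∪ B
    exacts [Or.inl hω, Or.inr (hS hω)]
  have := (measureReal_mono (μ := μ) hcover).trans <| (measureReal_union_le _ _).trans <|
    add_le_add_left (measureReal_union_le A B) _
  rw [probReal_univ] at this
  linarith

theorem generalization_bound_cumulative_general
    {X : Type*} [MeasurableSpace X] (ρ : Measure X) [IsProbabilityMeasure ρ]
    (P : ℕ) (T : ℕ → X → X) (hT0 : T 0 = id) (hTmeas : ∀ k, Measurable (T k))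
    (n : ℕ) (h : X → EuclideanSpace ℝ (Fin n)) (hmeas : Measurable h)
    (Abar : Matrix (Fin n) (Fin n) ℝ)
    (α : ℝ) (hα1 : α < 1)
    (hnorm : ‖Matrix.toEuclideanCLM (𝕜 := ℝ) Abar‖ ≤ α)
    (g gtil d : X → ℝ)
    (hg : g = fun x => (1 / P : ℝ) * ∑ k ∈ Finset.range P,
        ‖h (T (k + 1) x) - Matrix.toEuclideanCLM (𝕜 := ℝ) Abar (h (T k x))‖ ^ 2)
    (hgtil : gtil = fun x => (1 / P : ℝ) * ∑ k ∈ Finset.range P,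
        ‖h (T (k + 1) x) - Matrix.toEuclideanCLM (𝕜 := ℝ) (Abar ^ (k + 1)) (h x)‖ ^ 2)
    (hdmeas : Measurable d)
    (F H : ℝ) (hF : 0 < F) (hH : 0 < H)
    (hgF : ∀ x, 0 ≤ g x ∧ g x ≤ F) (hdH : ∀ x, 0 ≤ d x ∧ d x ≤ H)
    (L : ℝ)
    (δ₁ δ₂ : ℝ) (hδ₁ : δ₁ ∈ Set.Ioo (0 : ℝ) 1) (hδ₂ : δ₂ ∈ Set.Ioo (0 : ℝ) 1)
    (M : ℕ) (hM : 1 ≤ M) :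
    ENNReal.ofReal (1 - δ₁ - δ₂) ≤
      Measure.pi (fun _ : Fin M => ρ)
        {xs : Fin M → X |
          (1 / M : ℝ) * ∑ i, g (xs i) ≤ L ^ 2 * ((1 / M : ℝ) * ∑ i, d (xs i)) ^ 2 →
          ∫ x, gtil x ∂ρ ≤
            (1 - α)⁻¹ ^ 2 *
              (L ^ 2 * (∫ x, d x ∂ρ + H * Real.sqrt (Real.log (1 / δ₂) / (2 * M))) ^ 2
                + F * Real.sqrt (Real.log (1 / δ₁) / (2 * M)))} := by
  have hgmeas : Measurable g := by rw [hg]; fun_prop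
  have hgtil_le (x : X) : gtil x ≤ (1 - α)⁻¹ ^ 2 * g x := by
    have := sum_norm_sub_pow_succ_apply_sq_le hnorm hα1 (fun j => h (T j x)) P
    simp only [hT0, id, ← map_pow] at this
    simp only [hgtil, hg]
    calc _ ≤ (1 / P : ℝ) * ((1 - α)⁻¹ ^ 2 * _) := by gcongr
      _ = _ := by ring
  have hintegral : ∫ x, gtil x ∂ρ ≤ (1 - α)⁻¹ ^ 2 * ∫ x, g x ∂ρ := by
    rw [← integral_const_mul]
    refine integral_mono_of_nonneg (ae_of_all _ fun x => ?_)
      ((Integrable.of_mem_Icc 0 F hgmeas.aemeasurable (ae_of_all _ hgF)).const_mul _)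
      (ae_of_all _ hgtil_le)
    rw [hgtil]
    positivity
  refine ofReal_one_sub_sub_le_measure
    (measureReal_pi_le_integral_sub_sampleMean hgmeas.aemeasurable (ae_of_all _ hgF) hF hM
      hδ₁.1 hδ₁.2.le)
    (measureReal_pi_le_sampleMean_sub_integral hdmeas.aemeasurable (ae_of_all _ hdH) hH hM
      hδ₂.1 hδ₂.2.le) fun xs hxs hempirical => ?_
  simp only [Set.mem_compl_iff, Set.mem_union, not_or, Set.mem_ofPred_eq, not_le, sub_zero]
    at hxs
  obtain ⟨hg_lt, hd_lt⟩ := hxs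
  have hd_mean : ((1 / M : ℝ) * ∑ i, d (xs i)) ^ 2 ≤
      (∫ x, d x ∂ρ + H * √(log (1 / δ₂) / (2 * M))) ^ 2 := by
    have hd_nonneg : 0 ≤ (1 / M : ℝ) * ∑ i, d (xs i) :=
      mul_nonneg (by positivity) (sum_nonneg fun i _ => (hdH (xs i)).1)
    exact pow_le_pow_left₀ hd_nonneg (by linarith) 2
  refine hintegral.trans ?_
  gcongr
  linarith [mul_le_mul_of_nonneg_left hd_mean (sq_nonneg L)]

/-- Corollary 4 of the paper: if moreover `‖Ā‖ ≤ α < 1` (Euclidean operator norm), then with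
probability at least `1 − δ₁ − δ₂` over an i.i.d. sample, the empirical scaled-MSE inequality
implies the bound on the expected cumulative squared prediction error
`∫ g̃ dρ ≤ (1 − α)⁻² [ L² (∫ d dρ + H √(log(1/δ₂)/(2M)))² + F √(log(1/δ₁)/(2M)) ]`,
where `g̃(x) = (1/P) Σₖ ‖h(T_k x) − Āᵏ h(x)‖²`. -/
theorem generalization_bound_cumulative
    {X : Type*} [MeasurableSpace X] (ρ : Measure X) [IsProbabilityMeasure ρ]
    (P : ℕ) (hP : 0 < P) (T : ℕ → X → X) (hT0 : T 0 = id) (hTmeas : ∀ k, Measurable (T k))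
    (n : ℕ) (h : X → EuclideanSpace ℝ (Fin n)) (hmeas : Measurable h)
    (Abar : Matrix (Fin n) (Fin n) ℝ)
    (α : ℝ) (hα0 : 0 ≤ α) (hα1 : α < 1)
    (hnorm : ‖Matrix.toEuclideanCLM (𝕜 := ℝ) Abar‖ ≤ α)
    (g gtil d : X → ℝ)
    (hg : g = fun x => (1 / P : ℝ) * ∑ k ∈ Finset.range P,
        ‖h (T (k + 1) x) - Matrix.toEuclideanCLM (𝕜 := ℝ) Abar (h (T k x))‖ ^ 2)
    (hgtil : gtil = fun x => (1 / P : ℝ) * ∑ k ∈ Finset.range P,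
        ‖h (T (k + 1) x) - Matrix.toEuclideanCLM (𝕜 := ℝ) (Abar ^ (k + 1)) (h x)‖ ^ 2)
    (hdmeas : Measurable d)
    (F H : ℝ) (hF : 0 < F) (hH : 0 < H)
    (hgF : ∀ x, 0 ≤ g x ∧ g x ≤ F) (hdH : ∀ x, 0 ≤ d x ∧ d x ≤ H)
    (L : ℝ) (hL : 0 ≤ L)
    (δ₁ δ₂ : ℝ) (hδ₁ : δ₁ ∈ Set.Ioo (0 : ℝ) 1) (hδ₂ : δ₂ ∈ Set.Ioo (0 : ℝ) 1)
    (M : ℕ) (hM : 1 ≤ M) :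
    ENNReal.ofReal (1 - δ₁ - δ₂) ≤
      Measure.pi (fun _ : Fin M => ρ)
        {xs : Fin M → X |
          (1 / M : ℝ) * ∑ i, g (xs i) ≤ L ^ 2 * ((1 / M : ℝ) * ∑ i, d (xs i)) ^ 2 →
          ∫ x, gtil x ∂ρ ≤
            (1 - α)⁻¹ ^ 2 *
              (L ^ 2 * (∫ x, d x ∂ρ + H * Real.sqrt (Real.log (1 / δ₂) / (2 * M))) ^ 2
                + F * Real.sqrt (Real.log (1 / δ₁) / (2 * M)))} :=
  generalization_bound_cumulative_general ρ P T hT0 hTmeas n h hmeas Abar α hα1 hnorm g gtil d hg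
    hgtil hdmeas F H hF hH hgF hdH L δ₁ δ₂ hδ₁ hδ₂ M hM
end
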